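/- arXiv:2109.08272 — 4 statements merged into one kernel-verified Lean document; each statement's English description precedes it below -/
import Mathlib

section
/- For real numbers u_i, u_j and a function f : ℝ → ℝ that is Lipschitz with constant L on the interval with endpoints u_i and u_j, and any λ ≥ L with λ > 0, the intermediate (bar) state ū = (u_i + u_j)/2 − (f(u_j) − f(u_i))/(2λ) satisfies min{u_i,u_j} ≤ ū ≤ max{u_i,u_j}. -/
theorem lax_friedrichs_bar_state_bound
    (ui uj L lam : ℝ) (f : ℝ → ℝ)
    (hf : ∀ x ∈ Set.uIcc ui uj, ∀ y ∈ Set.uIcc ui uj, |f x - f y| ≤ L * |x - y|)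
    (hL : L ≤ lam) (hlam : 0 < lam) :
    min ui uj ≤ (ui + uj) / 2 - (f uj - f ui) / (2 * lam) ∧
    (ui + uj) / 2 - (f uj - f ui) / (2 * lam) ≤ max ui uj := by
  have h1 : |f uj - f ui| ≤ lam * |uj - ui| := by
    have := hf uj Set.right_mem_uIcc ui Set.left_mem_uIcc
    calc |f uj - f ui| ≤ L * |uj - ui| := this
      _ ≤ lam * |uj - ui| := by
        apply mul_le_mul_of_nonneg_right hL (abs_nonneg _)
  have h2 : |(f uj - f ui) / (2 * lam)| ≤ |uj - ui| / 2 := by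
    rw [abs_div, abs_of_pos (by linarith : (0:ℝ) < 2 * lam)]
    rw [div_le_div_iff₀ (by linarith) (by norm_num)]
    calc |f uj - f ui| * 2 ≤ lam * |uj - ui| * 2 := by linarith
      _ = |uj - ui| * (2 * lam) := by ring
  have habs := abs_le.mp h2
  have hmin : min ui uj = (ui + uj) / 2 - |uj - ui| / 2 := by
    rcases le_total ui uj with h | h
    · rw [min_eq_left h, abs_of_nonneg (by linarith)]; ring
    · rw [min_eq_right h, abs_of_nonpos (by linarith)]; ring
  have hmax : max ui uj = (ui + uj) / 2 + |uj - ui| / 2 := by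
    rcases le_total ui uj with h | h
    · rw [max_eq_right h, abs_of_nonneg (by linarith)]; ring
    · rw [max_eq_left h, abs_of_nonpos (by linarith)]; ring
  constructor
  · rw [hmin]; linarith [habs.2]
  · rw [hmax]; linarith [habs.1]
end

section
/- Consider the implicit (backward Euler) update on a finite index set I: for each i, u_i^{new} = u_i^{old} + (Δt/|K_i|) Σ_{j∈N_i} |S_{ij}| λ_{ij} (ū_{ij} − u_i^{new}), where Δt > 0, |K_i| > 0, |S_{ij}| ≥ 0, λ_{ij} ≥ 0, and each ū_{ij} satisfies m ≤ ū_{ij} ≤ M for constants m ≤ M. If m ≤ u_i^{old} ≤ M for all i and a solution (u_i^{new}) of this system exists, then m ≤ u_i^{new} ≤ M for all i, with no restriction on Δt. -/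
theorem backward_euler_unconditional_mpp
    {ι : Type*} [Fintype ι]
    (N : ι → Finset ι) (Δt m M : ℝ) (K : ι → ℝ) (S lam ubar : ι → ι → ℝ)
    (uold unew : ι → ℝ)
    (hΔt : 0 < Δt) (hK : ∀ i, 0 < K i)
    (hS : ∀ i j, 0 ≤ S i j) (hlam : ∀ i j, 0 ≤ lam i j)
    (hmM : m ≤ M)
    (hubar : ∀ i, ∀ j ∈ N i, m ≤ ubar i j ∧ ubar i j ≤ M)
    (hold : ∀ i, m ≤ uold i ∧ uold i ≤ M)
    (hsol : ∀ i, unew i = uold i +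
      (Δt / K i) * ∑ j ∈ N i, S i j * lam i j * (ubar i j - unew i)) :
    ∀ i, m ≤ unew i ∧ unew i ≤ M := by
  intro i
  constructor
  · -- lower bound: take a minimizer
    obtain ⟨k, -, hk⟩ := Finset.exists_min_image Finset.univ unew
      ⟨i, Finset.mem_univ i⟩
    have hki : unew k ≤ unew i := hk i (Finset.mem_univ i)
    by_contra h
    push_neg at h
    have hkm : unew k < m := lt_of_le_of_lt hki h
    have hsum : 0 ≤ ∑ j ∈ N k, S k j * lam k j * (ubar k j - unew k) := by
      apply Finset.sum_nonneg
      intro j hj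
      have := (hubar k j hj).1
      have h1 : 0 ≤ ubar k j - unew k := by linarith
      exact mul_nonneg (mul_nonneg (hS k j) (hlam k j)) h1
    have hcoef : 0 ≤ Δt / K k := le_of_lt (div_pos hΔt (hK k))
    have : m ≤ unew k := by
      rw [hsol k]
      have := (hold k).1
      nlinarith
    linarith
  · obtain ⟨k, -, hk⟩ := Finset.exists_max_image Finset.univ unew
      ⟨i, Finset.mem_univ i⟩
    have hki : unew i ≤ unew k := hk i (Finset.mem_univ i)
    by_contra h
    push_neg at h
    have hkm : M < unew k := lt_of_lt_of_le h hki
    have hsum : ∑ j ∈ N k, S k j * lam k j * (ubar k j - unew k) ≤ 0 := by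
      apply Finset.sum_nonpos
      intro j hj
      have := (hubar k j hj).2
      have h1 : ubar k j - unew k ≤ 0 := by linarith
      exact mul_nonpos_of_nonneg_of_nonpos
        (mul_nonneg (hS k j) (hlam k j)) h1
    have hcoef : 0 ≤ Δt / K k := le_of_lt (div_pos hΔt (hK k))
    have : unew k ≤ M := by
      rw [hsol k]
      have := (hold k).2
      nlinarith
    linarith
end

section
/- Zalesak-type FCT limiter bound: let ΔG_{ij} ∈ ℝ for j ∈ N_i, define P_i^+ = Σ_{j∈N_i} |S_{ij}| max{0, ΔG_{ij}}, P_i^− = Σ_{j∈N_i} |S_{ij}| min{0, ΔG_{ij}}, let Q_i^+ ≥ 0 ≥ Q_i^−, set R_i^+ = min{1, Q_i^+/P_i^+} (with R_i^+ = 1 if P_i^+ = 0), R_i^− = min{1, Q_i^−/P_i^−} (with R_i^− = 1 if P_i^− = 0), and α_{ij} = min{R_i^+, R_j^−} if ΔG_{ij} ≥ 0 and α_{ij} = min{R_i^−, R_j^+} otherwise. Then 0 ≤ α_{ij} ≤ 1 and Q_i^− ≤ Σ_{j∈N_i} |S_{ij}| α_{ij} ΔG_{ij} ≤ Q_i^+.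 -/
theorem zalesak_fct_limiter_bound
    {ι : Type*} [Fintype ι] (N : ι → Finset ι)
    (S ΔG : ι → ι → ℝ) (Qp Qm : ι → ℝ)
    (hS : ∀ i j, 0 ≤ S i j)
    (hQp : ∀ i, 0 ≤ Qp i) (hQm : ∀ i, Qm i ≤ 0)
    (Pp : ι → ℝ) (hPp : ∀ i, Pp i = ∑ j ∈ N i, S i j * max 0 (ΔG i j))
    (Pm : ι → ℝ) (hPm : ∀ i, Pm i = ∑ j ∈ N i, S i j * min 0 (ΔG i j))
    (Rp : ι → ℝ) (hRp : ∀ i, Rp i = if Pp i = 0 then 1 else min 1 (Qp i / Pp i))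
    (Rm : ι → ℝ) (hRm : ∀ i, Rm i = if Pm i = 0 then 1 else min 1 (Qm i / Pm i))
    (α : ι → ι → ℝ)
    (hα : ∀ i j, α i j = if 0 ≤ ΔG i j then min (Rp i) (Rm j) else min (Rm i) (Rp j)) :
    (∀ i j, 0 ≤ α i j ∧ α i j ≤ 1) ∧
    (∀ i, Qm i ≤ ∑ j ∈ N i, S i j * α i j * ΔG i j ∧
      ∑ j ∈ N i, S i j * α i j * ΔG i j ≤ Qp i) := by
  have hPpnn : ∀ i, 0 ≤ Pp i := by
    intro i; rw [hPp]
    exact Finset.sum_nonneg fun j _ => mul_nonneg (hS i j) (le_max_left 0 _)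
  have hPmnp : ∀ i, Pm i ≤ 0 := by
    intro i; rw [hPm]
    exact Finset.sum_nonpos fun j _ =>
      mul_nonpos_of_nonneg_of_nonpos (hS i j) (min_le_left 0 _)
  have hRp01 : ∀ i, 0 ≤ Rp i ∧ Rp i ≤ 1 := by
    intro i; rw [hRp]
    split
    · exact ⟨zero_le_one, le_refl 1⟩
    · next h =>
      have hp : 0 < Pp i := lt_of_le_of_ne (hPpnn i) (Ne.symm h)
      exact ⟨le_min zero_le_one (div_nonneg (hQp i) hp.le), min_le_left _ _⟩
  have hRm01 : ∀ i, 0 ≤ Rm i ∧ Rm i ≤ 1 := by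
    intro i; rw [hRm]
    split
    · exact ⟨zero_le_one, le_refl 1⟩
    · next h =>
      have hp : Pm i < 0 := lt_of_le_of_ne (hPmnp i) h
      exact ⟨le_min zero_le_one (div_nonneg_iff.2 (Or.inr ⟨hQm i, hp.le⟩)),
        min_le_left _ _⟩
  have hα01 : ∀ i j, 0 ≤ α i j ∧ α i j ≤ 1 := by
    intro i j; rw [hα]
    split
    · exact ⟨le_min (hRp01 i).1 (hRm01 j).1, le_trans (min_le_left _ _) (hRp01 i).2⟩
    · exact ⟨le_min (hRm01 i).1 (hRp01 j).1, le_trans (min_le_left _ _) (hRm01 i).2⟩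
  refine ⟨hα01, fun i => ⟨?_, ?_⟩⟩
  · -- lower bound
    have h1 : Rm i * Pm i ≤ ∑ j ∈ N i, S i j * α i j * ΔG i j := by
      rw [hPm, Finset.mul_sum]
      apply Finset.sum_le_sum
      intro j _
      rcases le_or_gt 0 (ΔG i j) with h | h
      · have : min 0 (ΔG i j) = 0 := min_eq_left h
        rw [this, mul_zero, mul_zero]
        exact mul_nonneg (mul_nonneg (hS i j) (hα01 i j).1) h
      · have hαle : α i j ≤ Rm i := by
          rw [hα, if_neg (not_le.2 h)]; exact min_le_left _ _
        have : min 0 (ΔG i j) = ΔG i j := min_eq_right h.le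
        rw [this]
        nlinarith [mul_nonneg (hS i j) (sub_nonneg.2 hαle), h.le,
          mul_nonpos_of_nonneg_of_nonpos (mul_nonneg (hS i j) (sub_nonneg.2 hαle)) h.le]
    refine le_trans ?_ h1
    rw [hRm]
    split
    · next h => rw [h, mul_zero]; exact hQm i
    · next h =>
      have hp : Pm i < 0 := lt_of_le_of_ne (hPmnp i) h
      have h2 : Qm i / Pm i * Pm i ≤ min 1 (Qm i / Pm i) * Pm i :=
        mul_le_mul_of_nonpos_right (min_le_right _ _) hp.le
      rwa [div_mul_cancel₀ _ (ne_of_lt hp)] at h2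
  · -- upper bound
    have h1 : ∑ j ∈ N i, S i j * α i j * ΔG i j ≤ Rp i * Pp i := by
      rw [hPp, Finset.mul_sum]
      apply Finset.sum_le_sum
      intro j _
      rcases le_or_gt 0 (ΔG i j) with h | h
      · have hαle : α i j ≤ Rp i := by
          rw [hα, if_pos h]; exact min_le_left _ _
        have : max 0 (ΔG i j) = ΔG i j := max_eq_right h
        rw [this]
        nlinarith [mul_nonneg (mul_nonneg (hS i j) (sub_nonneg.2 hαle)) h]
      · have : max 0 (ΔG i j) = 0 := max_eq_left h.le
        rw [this, mul_zero, mul_zero]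
        exact mul_nonpos_of_nonneg_of_nonpos (mul_nonneg (hS i j) (hα01 i j).1) h.le
    refine le_trans h1 ?_
    rw [hRp]
    split
    · next h => rw [h, mul_zero]; exact hQp i
    · next h =>
      have hp : 0 < Pp i := lt_of_le_of_ne (hPpnn i) (Ne.symm h)
      have h2 : min 1 (Qp i / Pp i) * Pp i ≤ Qp i / Pp i * Pp i :=
        mul_le_mul_of_nonneg_right (min_le_right _ _) hp.le
      rwa [div_mul_cancel₀ _ (ne_of_lt hp).symm] at h2
end

section
/- GMC maximum principle theorem: let Δt, |K_i| > 0, a_i > 0, γ ≥ 0, and u^{min} ≤ u_i^{n} ≤ u^{max}. Suppose ū_i ∈ ℝ satisfies u^{min} ≤ ū_i ≤ u^{max}, and define ū_i^* = ū_i + (1/a_i) C_i where the correction C_i satisfies a_i[(u^{min} − ū_i) + γ(u^{min} − u_i^{n+1})] ≤ C_i ≤ a_i[(u^{max} − ū_i) + γ(u^{max} − u_i^{n+1})]. Let g_i = u_i^{n+1} + (ū_i^* − u_i^{n+1})/(1+γ) and suppose u_i^{n+1} satisfies u_i^{n+1} = u_i^{n} + (Δt/|K_i|) a_i (1+γ)(g_i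 − u_i^{n+1}). Then u^{min} ≤ u_i^{n+1} ≤ u^{max}, with no restriction on Δt. -/
/-!
Eliminating the relaxation variable `g` turns the scheme into the implicit step
`uⁿ⁺¹ = uⁿ + (Δt / |K_i|) a_i (ū_i^* − uⁿ⁺¹)`, and the bounds on `C_i` say exactly that
`(1 + γ)(u^min − uⁿ⁺¹) ≤ ū_i^* − uⁿ⁺¹ ≤ (1 + γ)(u^max − uⁿ⁺¹)`.
If `uⁿ⁺¹ < u^min`, the increment `ū_i^* − uⁿ⁺¹` is then nonnegative, so
`uⁿ⁺¹ ≥ uⁿ ≥ u^min`, a contradiction; the upper bound is symmetric. Since only the sign of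
the coefficient `Δt / |K_i| · a_i` enters, no time step restriction arises.
-/

theorem le_of_eq_add_mul_of_mul_sub_le {m u u₀ c d κ : ℝ} (hc : 0 ≤ c) (hκ : 0 ≤ κ)
    (hu₀ : m ≤ u₀) (hd : κ * (m - u) ≤ d) (hu : u = u₀ + c * d) : m ≤ u := by
  by_contra! hlt
  have hd_nonneg : 0 ≤ d := (mul_nonneg hκ (by linarith)).trans hd
  linarith [mul_nonneg hc hd_nonneg]

theorem le_of_eq_add_mul_of_le_mul_sub {M u u₀ c d κ : ℝ} (hc : 0 ≤ c) (hκ : 0 ≤ κ)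
    (hu₀ : u₀ ≤ M) (hd : d ≤ κ * (M - u)) (hu : u = u₀ + c * d) : u ≤ M := by
  have := le_of_eq_add_mul_of_mul_sub_le (m := -M) (u := -u) (u₀ := -u₀) (d := -d) hc hκ
    (by linarith) (by linarith) (by rw [hu]; ring)
  linarith

theorem increment_bounds_of_correction_bounds {a γ m M u ubar C : ℝ} (ha : 0 < a)
    (hC : a * ((m - ubar) + γ * (m - u)) ≤ C ∧ C ≤ a * ((M - ubar) + γ * (M - u))) :
    (1 + γ) * (m - u) ≤ ubar + 1 / a * C - u ∧ ubar + 1 / a * C - u ≤ (1 + γ) * (M - u) := by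
  rw [one_div_mul_eq_div]
  obtain ⟨hlo, hhi⟩ := hC
  have hlo' : (m - ubar) + γ * (m - u) ≤ C / a := (le_div_iff₀' ha).mpr hlo
  have hhi' : C / a ≤ (M - ubar) + γ * (M - u) := (div_le_iff₀' ha).mpr hhi
  constructor <;> linarith

theorem gmc_maximum_principle_general
    (Δt Ki ai γ umin umax un unew ubar Ci : ℝ)
    (hΔt : 0 < Δt) (hK : 0 < Ki) (hai : 0 < ai) (hγ : 0 ≤ γ)
    (hun : umin ≤ un ∧ un ≤ umax)
    (hC : ai * ((umin - ubar) + γ * (umin - unew)) ≤ Ci ∧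
          Ci ≤ ai * ((umax - ubar) + γ * (umax - unew)))
    (ustar : ℝ) (hustar : ustar = ubar + (1 / ai) * Ci)
    (g : ℝ) (hg : g = unew + (ustar - unew) / (1 + γ))
    (hscheme : unew = un + (Δt / Ki) * ai * (1 + γ) * (g - unew)) :
    umin ≤ unew ∧ unew ≤ umax := by
  have hrelax : (1 + γ) * (g - unew) = ustar - unew := by
    rw [hg]
    field_simp
    ring
  have hstep : unew = un + (Δt / Ki * ai) * (ustar - unew) := by
    rw [← hrelax]
    linear_combination hscheme
  have hcoef : 0 ≤ Δt / Ki * ai := by positivity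
  have hγ1 : 0 ≤ 1 + γ := by linarith
  obtain ⟨hlo, hhi⟩ := increment_bounds_of_correction_bounds hai hC
  rw [← hustar] at hlo hhi
  exact ⟨le_of_eq_add_mul_of_mul_sub_le hcoef hγ1 hun.1 hlo hstep,
    le_of_eq_add_mul_of_le_mul_sub hcoef hγ1 hun.2 hhi hstep⟩

theorem gmc_maximum_principle
    (Δt Ki ai γ umin umax un unew ubar Ci : ℝ)
    (hΔt : 0 < Δt) (hK : 0 < Ki) (hai : 0 < ai) (hγ : 0 ≤ γ)
    (hun : umin ≤ un ∧ un ≤ umax)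
    (hubar : umin ≤ ubar ∧ ubar ≤ umax)
    (hC : ai * ((umin - ubar) + γ * (umin - unew)) ≤ Ci ∧
          Ci ≤ ai * ((umax - ubar) + γ * (umax - unew)))
    (ustar : ℝ) (hustar : ustar = ubar + (1 / ai) * Ci)
    (g : ℝ) (hg : g = unew + (ustar - unew) / (1 + γ))
    (hscheme : unew = un + (Δt / Ki) * ai * (1 + γ) * (g - unew)) :
    umin ≤ unew ∧ unew ≤ umax :=
  gmc_maximum_principle_general Δt Ki ai γ umin umax un unew ubar Ci hΔt hK hai hγ hun hC ustar
    hustar g hg hscheme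
end
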